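/- arXiv:1803.06716 — 2 statements merged into one kernel-verified Lean document; each statement's English description precedes it below -/
import Mathlib

section
/- Let q₁, q₂, q be positive integers with q → ∞ and max{q₁, q₂} = o(q²). Then the number of pairs (a,b) of integers with a ∈ [q₁, q₁+q], b ∈ [q₂, q₂+q] and gcd(a,b) = 1 equals q²(6/π² + o(1)). Equivalently, |#{(a,b) ∈ (ℤ ∩ [q₁,q₁+q]) × (ℤ ∩ [q₂,q₂+q]) : gcd(a,b)=1} / q² − 6/π²| → 0 as q → ∞ uniformly over such q₁, q₂. -/
/-!
Möbius inversion writes the indicator of `gcd a b = 1` as `∑ d ∣ gcd a b, μ d`, so the number of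
coprime pairs in the box is `∑_{d ≤ D} μ d · N₁(d) · N₂(d)`, where `D = q₁ + q` bounds the first
coordinate and `Nᵢ(d) = q / d + O(1)` counts the multiples of `d` in the `i`-th side. The main
term is `q² ∑_{d ≤ D} μ d / d² → q² / ζ(2) = 6 q² / π²`, and the error is
`O(q ∑_{d ≤ D} 1 / d + D) = O(q √D + D)`, which is `o(q²)` because `D = o(q²)`.
-/

open Finset Filter ArithmeticFunction
open scoped ArithmeticFunction.Moebius Real Topology

theorem hasSum_moebius_div_sq : HasSum (fun d : ℕ => (μ d : ℝ) / d ^ 2) (6 / π ^ 2) := by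
  have hs : 1 < (2 : ℂ).re := by norm_num
  have hL := LSeries_zeta_mul_Lseries_moebius hs
  rw [LSeries_zeta_eq_riemannZeta hs, riemannZeta_two, LSeries] at hL
  rw [← Complex.hasSum_ofReal]
  convert (LSeriesSummable_moebius_iff.mpr hs).hasSum using 1
  · ext n
    rcases eq_or_ne n 0 with rfl | hn
    · simp
    · simp [LSeries.term_of_ne_zero hn]
  · have : (π : ℂ) ≠ 0 := by exact_mod_cast Real.pi_ne_zero
    push_cast
    field_simp
    linear_combination -6 * hL

theorem tendsto_sum_Icc_moebius_div_sq :
    Tendsto (fun N => ∑ d ∈ Icc 1 N, (μ d : ℝ) / d ^ 2) atTop (𝓝 (6 / π ^ 2)) := by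
  refine (hasSum_moebius_div_sq.tendsto_sum_nat.comp (tendsto_add_atTop_nat 1)).congr fun N => ?_
  rw [Function.comp_apply, range_eq_Ico, sum_eq_sum_Ico_succ_bot N.succ_pos, zero_add,
    Nat.succ_eq_add_one, Ico_add_one_right_eq_Icc]
  simp

theorem sum_divisors_moebius (n : ℕ) :
    ∑ d ∈ n.divisors, (μ d : ℝ) = if n = 1 then 1 else 0 := by
  have := congr($(coe_moebius_mul_coe_zeta (R := ℝ)) n)
  rwa [coe_mul_zeta_apply, one_apply] at this

theorem sum_moebius_common_divisors {a D : ℕ} (b : ℕ) (ha : a ∈ Icc 1 D) :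
    ∑ d ∈ Icc 1 D with d ∣ a ∧ d ∣ b, (μ d : ℝ) = if Nat.gcd a b = 1 then 1 else 0 := by
  rw [mem_Icc] at ha
  have hdiv : {d ∈ Icc 1 D | d ∣ a ∧ d ∣ b} = (Nat.gcd a b).divisors := by
    ext d
    simp only [mem_filter, mem_Icc, Nat.mem_divisors, Nat.dvd_gcd_iff]
    constructor
    · rintro ⟨-, hda, hdb⟩
      exact ⟨⟨hda, hdb⟩, (Nat.gcd_pos_of_pos_left b (by omega)).ne'⟩
    · rintro ⟨⟨hda, hdb⟩, -⟩
      have := Nat.le_of_dvd (by omega) hda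
      exact ⟨⟨Nat.pos_of_dvd_of_pos hda (by omega), by omega⟩, hda, hdb⟩
  rw [hdiv, sum_divisors_moebius]

theorem card_filter_coprime_eq_sum_moebius {A B : Finset ℕ} {D : ℕ} (hA : A ⊆ Icc 1 D) :
    (#{p ∈ A ×ˢ B | Nat.gcd p.1 p.2 = 1} : ℝ) =
      ∑ d ∈ Icc 1 D, (μ d : ℝ) * #{a ∈ A | d ∣ a} * #{b ∈ B | d ∣ b} := by
  rw [natCast_card_filter]
  calc ∑ p ∈ A ×ˢ B, (if Nat.gcd p.1 p.2 = 1 then (1 : ℝ) else 0)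
      = ∑ p ∈ A ×ˢ B, ∑ d ∈ Icc 1 D, if d ∣ p.1 ∧ d ∣ p.2 then (μ d : ℝ) else 0 := by
        refine sum_congr rfl fun p hp => ?_
        rw [← sum_moebius_common_divisors p.2 (hA (mem_product.1 hp).1), sum_filter]
    _ = ∑ d ∈ Icc 1 D, (μ d : ℝ) * #{p ∈ A ×ˢ B | d ∣ p.1 ∧ d ∣ p.2} := by
        rw [sum_comm]
        simp_rw [← sum_filter, sum_const, nsmul_eq_mul, mul_comm]
    _ = _ := by
        simp_rw [filter_product, card_product, Nat.cast_mul, mul_assoc]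

theorem abs_card_filter_dvd_Icc_sub_div_le (m n : ℕ) {d : ℕ} (hd : 0 < d) :
    |(#{x ∈ Icc m (m + n) | d ∣ x} : ℝ) - n / d| ≤ 2 := by
  have hcard := Nat.Ico_filter_modEq_card m (m + n + 1) hd 0
  simp only [Nat.modEq_zero_iff_dvd, Ico_add_one_right_eq_Icc, CharP.cast_eq_zero,
    sub_zero] at hcard
  set X : ℚ := ((m + n + 1 : ℕ) : ℚ) / d
  set Y : ℚ := (m : ℚ) / d
  have hXY : X - Y = n / d + 1 / d := by simp only [X, Y]; push_cast; ring
  have hd₀ : 0 ≤ 1 / (d : ℚ) := by positivity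
  have hd₁ : 1 / (d : ℚ) ≤ 1 := by rw [div_le_one (by positivity)]; exact_mod_cast hd
  have hYX : Y ≤ X := by linarith [show 0 ≤ (n : ℚ) / d by positivity]
  rw [max_eq_left (sub_nonneg.2 (Int.ceil_mono hYX))] at hcard
  have hQ : |(#{x ∈ Icc m (m + n) | d ∣ x} : ℚ) - n / d| ≤ 2 := by
    rw [show (#{x ∈ Icc m (m + n) | d ∣ x} : ℚ) = ((⌈X⌉ - ⌈Y⌉ : ℤ) : ℚ) by exact_mod_cast hcard,
      Int.cast_sub, abs_le]
    have := Int.le_ceil X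
    have := Int.ceil_lt_add_one X
    have := Int.le_ceil Y
    have := Int.ceil_lt_add_one Y
    constructor <;> linarith
  rw [← Rat.cast_le (K := ℝ)] at hQ
  push_cast at hQ
  exact hQ

theorem abs_mul_sub_sq_le {a b x e : ℝ} (ha : |a - x| ≤ e) (hb : |b - x| ≤ e) (hx : 0 ≤ x) :
    |a * b - x ^ 2| ≤ e * (2 * x + e) := by
  have hb' : |b| ≤ x + e :=
    abs_le.2 ⟨by linarith [(abs_le.1 hb).1], by linarith [(abs_le.1 hb).2]⟩
  calc |a * b - x ^ 2| = |(a - x) * b + x * (b - x)| := by ring_nf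
    _ ≤ |a - x| * |b| + x * |b - x| :=
        (abs_add_le _ _).trans_eq (by rw [abs_mul, abs_mul, abs_of_nonneg hx])
    _ ≤ e * (x + e) + x * e := by gcongr; exact (abs_nonneg _).trans ha
    _ = e * (2 * x + e) := by ring

theorem one_add_log_le_two_mul_sqrt {x : ℝ} (hx : 0 < x) : 1 + Real.log x ≤ 2 * √x := by
  have h := Real.log_le_sub_one_of_pos (Real.sqrt_pos.2 hx)
  rw [Real.log_sqrt hx.le] at h
  linarith

theorem sum_Icc_inv_le_two_mul_sqrt (D : ℕ) : ∑ d ∈ Icc 1 D, (d : ℝ)⁻¹ ≤ 2 * √D := by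
  rcases D.eq_zero_or_pos with rfl | hD
  · simp
  have h := harmonic_le_one_add_log D
  rw [harmonic_eq_sum_Icc] at h
  push_cast at h
  exact h.trans (one_add_log_le_two_mul_sqrt (by exact_mod_cast hD))

theorem abs_card_coprime_div_sq_sub_sum_le (m₁ m₂ : ℕ) {n : ℕ} (hm₁ : 0 < m₁) (hn : 0 < n) :
    |(#{p ∈ Icc m₁ (m₁ + n) ×ˢ Icc m₂ (m₂ + n) | Nat.gcd p.1 p.2 = 1} : ℝ) / n ^ 2 -
        ∑ d ∈ Icc 1 (m₁ + n), (μ d : ℝ) / d ^ 2| ≤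
      8 * √((m₁ + n) / n ^ 2) + 4 * ((m₁ + n) / n ^ 2) := by
  set D := m₁ + n
  have hn' : (0 : ℝ) < n := by exact_mod_cast hn
  have hterm : ∀ d ∈ Icc 1 D, |(μ d : ℝ) * #{a ∈ Icc m₁ (m₁ + n) | d ∣ a} *
      #{b ∈ Icc m₂ (m₂ + n) | d ∣ b} - n ^ 2 * ((μ d : ℝ) / d ^ 2)| ≤ 4 * n * (d : ℝ)⁻¹ + 4 := by
    intro d hd
    have hd : 0 < d := (mem_Icc.1 hd).1
    have hμ : |(μ d : ℝ)| ≤ 1 := by exact_mod_cast abs_moebius_le_one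
    have hprod := abs_mul_sub_sq_le (abs_card_filter_dvd_Icc_sub_div_le m₁ n hd)
      (abs_card_filter_dvd_Icc_sub_div_le m₂ n hd) (by positivity)
    calc _ = |(μ d : ℝ)| * |#{a ∈ Icc m₁ (m₁ + n) | d ∣ a} * #{b ∈ Icc m₂ (m₂ + n) | d ∣ b}
          - ((n : ℝ) / d) ^ 2| := by rw [← abs_mul]; ring_nf
      _ ≤ 1 * (2 * (2 * (n / d) + 2)) := by gcongr
      _ = 4 * n * (d : ℝ)⁻¹ + 4 := by ring
  have hsum : |(#{p ∈ Icc m₁ (m₁ + n) ×ˢ Icc m₂ (m₂ + n) | Nat.gcd p.1 p.2 = 1} : ℝ) -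
      n ^ 2 * ∑ d ∈ Icc 1 D, (μ d : ℝ) / d ^ 2| ≤ 8 * n * √D + 4 * D := by
    rw [card_filter_coprime_eq_sum_moebius (Icc_subset_Icc hm₁ le_rfl), mul_sum, ← sum_sub_distrib]
    calc _ ≤ ∑ d ∈ Icc 1 D, (4 * n * (d : ℝ)⁻¹ + 4) :=
          (abs_sum_le_sum_abs _ _).trans (sum_le_sum hterm)
      _ = 4 * n * ∑ d ∈ Icc 1 D, (d : ℝ)⁻¹ + 4 * D := by
        rw [sum_add_distrib, ← mul_sum]; simp [mul_comm]
      _ ≤ 4 * n * (2 * √D) + 4 * D := by gcongr; exact sum_Icc_inv_le_two_mul_sqrt D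
      _ = 8 * n * √D + 4 * D := by ring
  have hsqrt : √((D : ℝ) / n ^ 2) = √D / n := by
    rw [Real.sqrt_div' _ (by positivity), Real.sqrt_sq hn'.le]
  rw [show ((m₁ : ℝ) + n) = D by push_cast [D]; rfl, hsqrt]
  have hn2 : (0 : ℝ) < n ^ 2 := by positivity
  calc _ = |((#{p ∈ Icc m₁ (m₁ + n) ×ˢ Icc m₂ (m₂ + n) | Nat.gcd p.1 p.2 = 1} : ℝ) -
        n ^ 2 * ∑ d ∈ Icc 1 D, (μ d : ℝ) / d ^ 2) / n ^ 2| := by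
        rw [sub_div, mul_div_cancel_left₀ _ hn2.ne']
    _ ≤ (8 * n * √D + 4 * D) / n ^ 2 := by rw [abs_div, abs_of_pos hn2]; gcongr
    _ = _ := by field_simp

theorem coprime_pairs_in_boxes_general (q₁ q₂ q : ℕ → ℕ)
    (hq₁_pos : ∀ k, 0 < q₁ k)
    (hq : Tendsto q atTop atTop)
    (hmax : Tendsto (fun k => (max (q₁ k) (q₂ k) : ℝ) / (q k : ℝ) ^ 2) atTop (nhds 0)) :
    Tendsto (fun k =>
      (((Finset.Icc (q₁ k) (q₁ k + q k) ×ˢ Finset.Icc (q₂ k) (q₂ k + q k)).filter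
          (fun ab => Nat.gcd ab.1 ab.2 = 1)).card : ℝ) / (q k : ℝ) ^ 2)
      atTop (nhds (6 / Real.pi ^ 2)) := by
  have hq_pos : ∀ᶠ k in atTop, 0 < q k := hq.eventually_gt_atTop 0
  have hε : Tendsto (fun k => ((q₁ k : ℝ) + q k) / (q k) ^ 2) atTop (𝓝 0) := by
    have hupper : Tendsto (fun k => (max (q₁ k) (q₂ k) : ℝ) / (q k) ^ 2 + (q k : ℝ)⁻¹)
        atTop (𝓝 0) := by
      simpa using hmax.add (tendsto_inv_atTop_zero.comp (tendsto_natCast_atTop_atTop.comp hq))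
    refine tendsto_of_tendsto_of_tendsto_of_le_of_le' tendsto_const_nhds hupper
      (.of_forall fun k => by positivity) ?_
    filter_upwards [hq_pos] with k hk
    have hk' : (0 : ℝ) < q k := by exact_mod_cast hk
    rw [add_div, show (q k : ℝ) / q k ^ 2 = (q k : ℝ)⁻¹ by field_simp]
    gcongr
    exact_mod_cast le_max_left _ _
  have hbound := (((Real.continuous_sqrt.tendsto 0).comp hε).const_mul 8).add (hε.const_mul 4)
  simp only [Function.comp_def, Real.sqrt_zero, mul_zero, add_zero] at hbound
  have hS := tendsto_sum_Icc_moebius_div_sq.comp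
    (tendsto_atTop_mono (fun k => Nat.le_add_left (q k) (q₁ k)) hq)
  have herr := squeeze_zero_norm' (hq_pos.mono fun k hk => (Real.norm_eq_abs _).trans_le
    (abs_card_coprime_div_sq_sub_sum_le (q₁ k) (q₂ k) (hq₁_pos k) hk)) hbound
  simpa using herr.add hS

theorem coprime_pairs_in_boxes (q₁ q₂ q : ℕ → ℕ)
    (hq_pos : ∀ k, 0 < q k) (hq₁_pos : ∀ k, 0 < q₁ k) (hq₂_pos : ∀ k, 0 < q₂ k)
    (hq : Tendsto q atTop atTop)
    (hmax : Tendsto (fun k => (max (q₁ k) (q₂ k) : ℝ) / (q k : ℝ) ^ 2) atTop (nhds 0)) :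
    Tendsto (fun k =>
      (((Finset.Icc (q₁ k) (q₁ k + q k) ×ˢ Finset.Icc (q₂ k) (q₂ k + q k)).filter
          (fun ab => Nat.gcd ab.1 ab.2 = 1)).card : ℝ) / (q k : ℝ) ^ 2)
      atTop (nhds (6 / Real.pi ^ 2)) :=
  coprime_pairs_in_boxes_general q₁ q₂ q hq₁_pos hq hmax
end

section
/- Let p be a positive integer and let Z₁, ..., Z_p be independent random variables, where each Z_i is uniformly distributed on an integer interval [q_i, q_i + q] of length q with q → ∞ as p → ∞ and max_i q_i = o(q²). Then the probability that gcd(Z₁, ..., Z_p) ≠ 1 is at most (1 − 6/π² + o(1))^{⌊p/2⌋}, and in particular tends to 0 exponentially fast in p. -/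
/-!
If `gcd z ≠ 1`, some `ℓ ∈ (1, M]` divides every coordinate of `z`, where `M` bounds all the
intervals. An interval of `N = q + 1` integers contains at most `N / ℓ + 1` multiples of `ℓ`, so
the union bound over `ℓ` gives a proportion at most `∑_{1 < ℓ ≤ M} (1/ℓ + 1/N)^p`. Splitting off
`(1/ℓ + 1/N)^(p-2) ≤ (1/2 + 1/N)^(p-2)` leaves `∑ (1/ℓ + 1/N)² ≤ 2 (1 + M / N²)`, which stays
bounded because `M = o(N²)`. The proportion is thus eventually at most `6 · 0.51^(p-2) ≤ 0.626^p`,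
and `0.626² < 1 - 6/π²`, so the bound already holds with `ε = 0`.
-/

open Filter Finset

lemma Nat.Ioc_filter_dvd_card_le (a n ℓ : ℕ) : #{x ∈ Ioc a (a + n) | ℓ ∣ x} ≤ n / ℓ + 1 := by
  have hsplit : #{x ∈ Ioc 0 (a + n) | ℓ ∣ x}
      = #{x ∈ Ioc 0 a | ℓ ∣ x} + #{x ∈ Ioc a (a + n) | ℓ ∣ x} := by
    rw [← card_union_of_disjoint (disjoint_filter_filter (Ioc_disjoint_Ioc_of_le le_rfl)),
      ← filter_union, Ioc_union_Ioc_eq_Ioc (Nat.zero_le a) (Nat.le_add_right a n)]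
  rw [Nat.Ioc_filter_dvd_card_eq_div, Nat.Ioc_filter_dvd_card_eq_div] at hsplit
  have := Nat.add_div_le_div_add_div_add_one a n ℓ
  omega

lemma card_filter_dvd_Icc_le {a : ℕ} (ha : 0 < a) (Q ℓ : ℕ) :
    (#{x ∈ Icc a (a + Q) | ℓ ∣ x} : ℝ) ≤ (Q + 1) / ℓ + 1 := by
  have hIcc : Icc a (a + Q) = Ioc (a - 1) (a - 1 + (Q + 1)) := by
    ext x; simp only [mem_Icc, mem_Ioc]; omega
  rw [hIcc]
  calc (#{x ∈ Ioc (a - 1) (a - 1 + (Q + 1)) | ℓ ∣ x} : ℝ)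
        ≤ (((Q + 1) / ℓ + 1 : ℕ) : ℝ) := by
        exact_mod_cast Nat.Ioc_filter_dvd_card_le _ _ _
    _ ≤ (Q + 1) / ℓ + 1 := by
        push_cast
        gcongr
        exact_mod_cast Nat.cast_div_le

lemma Fintype.filter_piFinset_forall {ι α : Type*} [Fintype ι] [DecidableEq ι]
    (s : ι → Finset α) (P : α → Prop) [DecidablePred P] :
    {z ∈ Fintype.piFinset s | ∀ i, P (z i)} = Fintype.piFinset fun i => {x ∈ s i | P x} := by
  ext z
  simp only [mem_filter, Fintype.mem_piFinset, forall_and]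

lemma card_filter_gcd_ne_one_le_sum {ι : Type*} [Fintype ι] [DecidableEq ι] [Nonempty ι]
    {s : ι → Finset ℕ} {M : ℕ} (hs : ∀ i, ∀ x ∈ s i, 0 < x ∧ x ≤ M) :
    #{z ∈ Fintype.piFinset s | univ.gcd z ≠ 1} ≤ ∑ ℓ ∈ Ioc 1 M, ∏ i, #{x ∈ s i | ℓ ∣ x} := by
  have hcover : {z ∈ Fintype.piFinset s | univ.gcd z ≠ 1} ⊆
      (Ioc 1 M).biUnion fun ℓ => {z ∈ Fintype.piFinset s | ∀ i, ℓ ∣ z i} := by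
    intro z hz
    obtain ⟨hzs, hz1⟩ := mem_filter.mp hz
    obtain ⟨i⟩ := ‹Nonempty ι›
    obtain ⟨hzi_pos, hzi_le⟩ := hs i (z i) (Fintype.mem_piFinset.mp hzs i)
    have hdvd : ∀ j, univ.gcd z ∣ z j := fun j => gcd_dvd (mem_univ j)
    have hgcd_pos : 0 < univ.gcd z := Nat.pos_of_dvd_of_pos (hdvd i) hzi_pos
    have hgcd_le : univ.gcd z ≤ M := (Nat.le_of_dvd hzi_pos (hdvd i)).trans hzi_le
    exact mem_biUnion.mpr
      ⟨univ.gcd z, mem_Ioc.mpr ⟨by omega, hgcd_le⟩, mem_filter.mpr ⟨hzs, hdvd⟩⟩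
  calc _ ≤ _ := card_le_card hcover
    _ ≤ _ := card_biUnion_le
    _ = _ := by simp only [Fintype.filter_piFinset_forall, Fintype.card_piFinset]

lemma prod_card_filter_dvd_Icc_div_le {ι : Type*} [Fintype ι] {a : ι → ℕ} (ha : ∀ i, 0 < a i)
    (Q ℓ : ℕ) :
    (∏ i, #{x ∈ Icc (a i) (a i + Q) | ℓ ∣ x} : ℝ) / ((Q : ℝ) + 1) ^ Fintype.card ι
      ≤ (1 / ℓ + 1 / ((Q : ℝ) + 1)) ^ Fintype.card ι := by
  rw [div_le_iff₀ (by positivity), ← mul_pow, ← card_univ, ← prod_const]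
  refine prod_le_prod (fun i _ => by positivity) fun i _ => ?_
  calc (#{x ∈ Icc (a i) (a i + Q) | ℓ ∣ x} : ℝ) ≤ (Q + 1) / ℓ + 1 :=
        card_filter_dvd_Icc_le (ha i) Q ℓ
    _ = (1 / ℓ + 1 / ((Q : ℝ) + 1)) * (Q + 1) := by field_simp

lemma sum_Ioc_one_div_add_pow_le {N : ℝ} (hN : 0 < N) (M : ℕ) {p : ℕ} (hp : 2 ≤ p) :
    ∑ ℓ ∈ Ioc 1 M, (1 / (ℓ : ℝ) + 1 / N) ^ p
      ≤ 2 * (1 + M / N ^ 2) * (1 / 2 + 1 / N) ^ (p - 2) := by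
  have hterm : ∀ ℓ ∈ Ioc 1 M, (1 / (ℓ : ℝ) + 1 / N) ^ p
      ≤ (1 / 2 + 1 / N) ^ (p - 2) * (2 * (((ℓ : ℝ) ^ 2)⁻¹ + (N ^ 2)⁻¹)) := by
    intro ℓ hℓ
    have hℓ2 : (2 : ℝ) ≤ ℓ := by exact_mod_cast (mem_Ioc.mp hℓ).1
    have hsq : (1 / (ℓ : ℝ) + 1 / N) ^ 2 ≤ 2 * (((ℓ : ℝ) ^ 2)⁻¹ + (N ^ 2)⁻¹) := by
      rw [← inv_pow, ← inv_pow, ← one_div, ← one_div]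
      nlinarith [sq_nonneg (1 / (ℓ : ℝ) - 1 / N)]
    rw [← Nat.sub_add_cancel hp, pow_add, Nat.add_sub_cancel]
    gcongr
  have hinv_sq : ∑ ℓ ∈ Ioc 1 M, ((ℓ : ℝ) ^ 2)⁻¹ ≤ 1 := by
    simpa [Ioo_add_one_right_eq_Ioc, one_add_one_eq_two] using
      sum_Ioo_inv_sq_le (α := ℝ) 1 (M + 1)
  have hcard : ((M - 1 : ℕ) : ℝ) ≤ M := by exact_mod_cast Nat.sub_le M 1
  calc ∑ ℓ ∈ Ioc 1 M, (1 / (ℓ : ℝ) + 1 / N) ^ p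
      ≤ ∑ ℓ ∈ Ioc 1 M, (1 / 2 + 1 / N) ^ (p - 2) * (2 * (((ℓ : ℝ) ^ 2)⁻¹ + (N ^ 2)⁻¹)) :=
        sum_le_sum hterm
    _ = (1 / 2 + 1 / N) ^ (p - 2)
          * (2 * (∑ ℓ ∈ Ioc 1 M, ((ℓ : ℝ) ^ 2)⁻¹ + (M - 1 : ℕ) * (N ^ 2)⁻¹)) := by
        rw [← mul_sum, ← mul_sum, sum_add_distrib, sum_const, Nat.card_Ioc, nsmul_eq_mul]
    _ ≤ (1 / 2 + 1 / N) ^ (p - 2) * (2 * (1 + M * (N ^ 2)⁻¹)) := by gcongr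
    _ = 2 * (1 + M / N ^ 2) * (1 / 2 + 1 / N) ^ (p - 2) := by ring

lemma card_filter_gcd_ne_one_div_le {ι : Type*} [Fintype ι] [DecidableEq ι]
    (hι : 2 ≤ Fintype.card ι) {a : ι → ℕ} (ha : ∀ i, 0 < a i) {Q M : ℕ}
    (hM : ∀ i, a i + Q ≤ M) :
    (#{z ∈ Fintype.piFinset (fun i => Icc (a i) (a i + Q)) | univ.gcd z ≠ 1} : ℝ)
        / ((Q : ℝ) + 1) ^ Fintype.card ι
      ≤ 2 * (1 + M / ((Q : ℝ) + 1) ^ 2)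
          * (1 / 2 + 1 / ((Q : ℝ) + 1)) ^ (Fintype.card ι - 2) := by
  have : Nonempty ι := Fintype.card_pos_iff.mp (by omega)
  have hs : ∀ i, ∀ x ∈ Icc (a i) (a i + Q), 0 < x ∧ x ≤ M := fun i x hx => by
    have := mem_Icc.mp hx; have := ha i; have := hM i; omega
  calc _ ≤ (∑ ℓ ∈ Ioc 1 M, ∏ i, #{x ∈ Icc (a i) (a i + Q) | ℓ ∣ x} : ℝ)
          / ((Q : ℝ) + 1) ^ Fintype.card ι := by
        gcongr; exact_mod_cast card_filter_gcd_ne_one_le_sum hs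
    _ ≤ ∑ ℓ ∈ Ioc 1 M, (1 / (ℓ : ℝ) + 1 / ((Q : ℝ) + 1)) ^ Fintype.card ι := by
        rw [sum_div]; exact sum_le_sum fun ℓ _ => prod_card_filter_dvd_Icc_div_le ha Q ℓ
    _ ≤ _ := sum_Ioc_one_div_add_pow_le (by positivity) M hι

lemma six_mul_pow_sub_two_le {p : ℕ} (hp : 20 ≤ p) : 6 * (0.51 : ℝ) ^ (p - 2) ≤ 0.626 ^ p := by
  obtain ⟨k, rfl⟩ := Nat.exists_eq_add_of_le hp
  rw [show 20 + k - 2 = 18 + k by omega, pow_add, pow_add, ← mul_assoc]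
  exact mul_le_mul (by norm_num) (pow_le_pow_left₀ (by norm_num) (by norm_num) k) (by positivity)
    (by positivity)

lemma sq_le_one_sub_six_div_pi_sq : (0.626 : ℝ) ^ 2 ≤ 1 - 6 / Real.pi ^ 2 := by
  have : 6 / Real.pi ^ 2 ≤ 6 / 3.1415 ^ 2 := by gcongr; exact Real.pi_gt_d4.le
  norm_num at this ⊢
  linarith

lemma eventually_card_filter_gcd_ne_one_div_le (q : ℕ → ℕ) (qi : ℕ → ℕ → ℕ)
    (hqi_pos : ∀ p i, 0 < qi p i) (hq : Tendsto q atTop atTop)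
    (hmax : Tendsto (fun p => (((range p).sup (qi p) : ℕ) : ℝ) / (q p : ℝ) ^ 2)
      atTop (nhds 0)) :
    ∀ᶠ p in atTop,
      (#{z ∈ Fintype.piFinset (fun i : Fin p => Icc (qi p i) (qi p i + q p)) |
          univ.gcd z ≠ 1} : ℝ) / ((q p : ℝ) + 1) ^ p ≤ 0.626 ^ p := by
  have hq100 : ∀ᶠ p in atTop, 100 ≤ q p := hq.eventually_ge_atTop 100
  have hsup_le : ∀ᶠ p in atTop, (range p).sup (qi p) ≤ q p ^ 2 := by
    filter_upwards [hq100, hmax.eventually (gt_mem_nhds one_pos)] with p hp hlt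
    have : (0 : ℝ) < q p ^ 2 := by positivity
    exact_mod_cast ((div_lt_one this).mp hlt).le
  filter_upwards [hq100, hsup_le, eventually_ge_atTop 20] with p hQ hsup hp
  have hM : ∀ i : Fin p, qi p i + q p ≤ (range p).sup (qi p) + q p := fun i => by
    gcongr; exact le_sup (mem_range.mpr i.isLt)
  have hQr : (100 : ℝ) ≤ q p := by exact_mod_cast hQ
  have hMN : (((range p).sup (qi p) + q p : ℕ) : ℝ) / ((q p : ℝ) + 1) ^ 2 ≤ 2 := by
    have : (((range p).sup (qi p) : ℕ) : ℝ) ≤ (q p : ℝ) ^ 2 := by exact_mod_cast hsup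
    rw [div_le_iff₀ (by positivity)]
    push_cast
    nlinarith
  have hN : 1 / 2 + 1 / ((q p : ℝ) + 1) ≤ 0.51 := by
    have : 1 / ((q p : ℝ) + 1) ≤ 1 / 101 := by gcongr; linarith
    linarith
  have hbound := card_filter_gcd_ne_one_div_le (by simpa using (by omega : 2 ≤ p))
    (fun i : Fin p => hqi_pos p i) hM
  rw [Fintype.card_fin] at hbound
  calc _ ≤ _ := hbound
    _ ≤ 2 * (1 + 2) * 0.51 ^ (p - 2) := by gcongr
    _ = 6 * 0.51 ^ (p - 2) := by norm_num
    _ ≤ 0.626 ^ p := six_mul_pow_sub_two_le hp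

theorem gcd_tuple_not_one_prob_bound_general (q : ℕ → ℕ) (qi : ℕ → ℕ → ℕ)
    (hqi_pos : ∀ p i, 0 < qi p i)
    (hq : Tendsto q atTop atTop)
    (hmax : Tendsto (fun p => (((Finset.range p).sup (qi p) : ℕ) : ℝ) / (q p : ℝ) ^ 2)
      atTop (nhds 0)) :
    ∃ ε : ℕ → ℝ, Tendsto ε atTop (nhds 0) ∧
      (∀ᶠ p in atTop,
        (((Fintype.piFinset (fun i : Fin p => Finset.Icc (qi p i) (qi p i + q p))).filter
            (fun z => Finset.univ.gcd z ≠ 1)).card : ℝ) / ((q p : ℝ) + 1) ^ p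
          ≤ (1 - 6 / Real.pi ^ 2 + ε p) ^ (p / 2)) ∧
      Tendsto (fun p =>
        (((Fintype.piFinset (fun i : Fin p => Finset.Icc (qi p i) (qi p i + q p))).filter
            (fun z => Finset.univ.gcd z ≠ 1)).card : ℝ) / ((q p : ℝ) + 1) ^ p)
        atTop (nhds 0) := by
  have hbound := eventually_card_filter_gcd_ne_one_div_le q qi hqi_pos hq hmax
  refine ⟨fun _ => 0, tendsto_const_nhds, ?_, ?_⟩
  · filter_upwards [hbound] with p hp
    calc _ ≤ (0.626 : ℝ) ^ p := hp
      _ ≤ ((0.626 : ℝ) ^ 2) ^ (p / 2) := by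
          rw [← pow_mul]
          exact pow_le_pow_of_le_one (by norm_num) (by norm_num) (Nat.mul_div_le p 2)
      _ ≤ (1 - 6 / Real.pi ^ 2 + 0) ^ (p / 2) := by
          rw [add_zero]; gcongr; exact sq_le_one_sub_six_div_pi_sq
  · exact tendsto_of_tendsto_of_tendsto_of_le_of_le' tendsto_const_nhds
      (tendsto_pow_atTop_nhds_zero_of_lt_one (by norm_num) (by norm_num))
      (Eventually.of_forall fun p => by positivity) hbound

/-- Independent uniform coordinates `Z i` on integer intervals `[qi p i, qi p i + q p]`
of length `q p → ∞`, with `max_i qi p i = o((q p)²)`: the fraction of tuples whose gcd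
is not 1 is at most `(1 - 6/π² + o(1))^⌊p/2⌋`. -/
theorem gcd_tuple_not_one_prob_bound (q : ℕ → ℕ) (qi : ℕ → ℕ → ℕ)
    (hq_pos : ∀ p, 0 < q p) (hqi_pos : ∀ p i, 0 < qi p i)
    (hq : Tendsto q atTop atTop)
    (hmax : Tendsto (fun p => (((Finset.range p).sup (qi p) : ℕ) : ℝ) / (q p : ℝ) ^ 2)
      atTop (nhds 0)) :
    ∃ ε : ℕ → ℝ, Tendsto ε atTop (nhds 0) ∧
      (∀ᶠ p in atTop,
        (((Fintype.piFinset (fun i : Fin p => Finset.Icc (qi p i) (qi p i + q p))).filter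
            (fun z => Finset.univ.gcd z ≠ 1)).card : ℝ) / ((q p : ℝ) + 1) ^ p
          ≤ (1 - 6 / Real.pi ^ 2 + ε p) ^ (p / 2)) ∧
      Tendsto (fun p =>
        (((Fintype.piFinset (fun i : Fin p => Finset.Icc (qi p i) (qi p i + q p))).filter
            (fun z => Finset.univ.gcd z ≠ 1)).card : ℝ) / ((q p : ℝ) + 1) ^ p)
        atTop (nhds 0) :=
  gcd_tuple_not_one_prob_bound_general q qi hqi_pos hq hmax
end
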